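/- arXiv:1202.0746 — 6 statements merged into one kernel-verified Lean document; each statement's English description precedes it below -/
import Mathlib

section
/- Let H be the group ℝ² ⋊ ℝ with underlying set ℝ² × ℝ and multiplication (q,r;p)(q',r';p') = (q+q', r+r'+pq'; p+p'), and let K be the group with underlying set ℝ × ℝ² and multiplication (p;q,r)(p';q',r') = (p+p'; q+q', r+r'+q p'). Define (q,r;p) ▷ (p';q',r') = (p'; q', r' − q p') and (q,r;p) ◁ (p';q',r') = (q, r − q' p; p). Then ▷ is a left action of H on K, ◁ is a right action of K on H, and together they satisfy the matched pair conditions: h ▷ (k k') = (h ▷ k)((h ◁ k) ▷ k') and (h h') ◁ k = (h ◁ (h' ▷ k))(h' ◁ k) for all h, h' ∈ H and k, k' ∈ K. -/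
/-- Multiplication of `H = ℝ² ⋊ ℝ`, elements written `(q, r; p)`. -/
def mulH (x y : ℝ × ℝ × ℝ) : ℝ × ℝ × ℝ :=
  (x.1 + y.1, x.2.1 + y.2.1 + x.2.2 * y.1, x.2.2 + y.2.2)

/-- Multiplication of `K`, elements written `(p; q, r)`. -/
def mulK (x y : ℝ × ℝ × ℝ) : ℝ × ℝ × ℝ :=
  (x.1 + y.1, x.2.1 + y.2.1, x.2.2 + y.2.2 + x.2.1 * y.1)

/-- The left action `(q,r;p) ▷ (p';q',r') = (p'; q', r' − q p')` of `H` on `K`. -/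
def actL (h k : ℝ × ℝ × ℝ) : ℝ × ℝ × ℝ := (k.1, k.2.1, k.2.2 - h.1 * k.1)

/-- The right action `(q,r;p) ◁ (p';q',r') = (q, r − q' p; p)` of `K` on `H`. -/
def actR (h k : ℝ × ℝ × ℝ) : ℝ × ℝ × ℝ := (h.1, h.2.1 - k.2.1 * h.2.2, h.2.2)

theorem actL_zero_left (k : ℝ × ℝ × ℝ) : actL (0, 0, 0) k = k := by
  ext <;> simp only [actL]; ring

theorem actL_mulH_left (h h' k : ℝ × ℝ × ℝ) :
    actL (mulH h h') k = actL h (actL h' k) := by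
  ext <;> simp only [actL, mulH]; ring

theorem actR_zero_right (h : ℝ × ℝ × ℝ) : actR h (0, 0, 0) = h := by
  ext <;> simp only [actR]; ring

theorem actR_mulK_right (h k k' : ℝ × ℝ × ℝ) :
    actR h (mulK k k') = actR (actR h k) k' := by
  ext <;> simp only [actR, mulK]; ring

theorem actL_zero_right (h : ℝ × ℝ × ℝ) : actL h (0, 0, 0) = (0, 0, 0) := by
  ext <;> simp only [actL]; ring

theorem actR_zero_left (k : ℝ × ℝ × ℝ) : actR (0, 0, 0) k = (0, 0, 0) := by
  ext <;> simp only [actR]; ring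

theorem actL_mulK_right (h k k' : ℝ × ℝ × ℝ) :
    actL h (mulK k k') = mulK (actL h k) (actL (actR h k) k') := by
  ext <;> simp only [actL, actR, mulK]; ring

theorem actR_mulH_left (h h' k : ℝ × ℝ × ℝ) :
    actR (mulH h h') k = mulH (actR h (actL h' k)) (actR h' k) := by
  ext <;> simp only [actL, actR, mulH]; ring

/-- `▷` is a left action of the group `H` on the set `K`, `◁` is a
right action of the group `K` on the set `H`, `h ▷ e = e`, `e ◁ k = e`, and the two
matched pair compatibility conditions hold. -/
theorem stmt_3 :
    (∀ k, actL (0, 0, 0) k = k) ∧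
    (∀ h h' k, actL (mulH h h') k = actL h (actL h' k)) ∧
    (∀ h, actR h (0, 0, 0) = h) ∧
    (∀ h k k', actR h (mulK k k') = actR (actR h k) k') ∧
    (∀ h, actL h (0, 0, 0) = (0, 0, 0)) ∧
    (∀ k, actR (0, 0, 0) k = (0, 0, 0)) ∧
    (∀ h k k', actL h (mulK k k') = mulK (actL h k) (actL (actR h k) k')) ∧
    (∀ h h' k, actR (mulH h h') k = mulH (actR h (actL h' k)) (actR h' k)) :=
  ⟨actL_zero_left, actL_mulH_left, actR_zero_right, actR_mulK_right,
    actL_zero_right, actR_zero_left, actL_mulK_right, actR_mulH_left⟩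
end

section
/- In the matched pair of groups from the previous statement, the actions moreover satisfy h ◁ (k k') = (h ◁ k)(h ◁ k') and (h h') ▷ k = (h ▷ k)(h' ▷ k) for all h, h' ∈ H and k, k' ∈ K; that is, each element of H acts on K by a group automorphism and each element of K acts on H by a group automorphism. -/
/-- In the matched pair `(H, K)` above, each element of `H` acts on
`K` by a group automorphism and each element of `K` acts on `H` by a group
automorphism: `h ▷ (k k') = (h ▷ k)(h ▷ k')` and `(h h') ◁ k = (h ◁ k)(h' ◁ k)`. -/
theorem stmt_4 :
    (∀ h k k', actL h (mulK k k') = mulK (actL h k) (actL h k')) ∧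
    (∀ h h' k, actR (mulH h h') k = mulH (actR h k) (actR h' k)) := by
  constructor <;> intros <;> simp [actL, actR, mulH, mulK, Prod.ext_iff] <;> ring
end

section
/- Let H and A be Hopf algebras over a field, with A finite dimensional, and suppose A is a right H-module bialgebra (the action is compatible with both multiplication and comultiplication and the counit). Let h be a left cointegral of A with h ◁ a = ρ(a) h, and k a right cointegral with k ◁ a = η(a) k. Then ρ = η. -/
open TensorProduct

/-!
The antipode sends the right cointegral `k` to a nonzero multiple of the left cointegral `h`, and it
commutes with the action, `S (b ◁ a) = S b ◁ a`. Hence `ρ(a) S k = S k ◁ a = S (k ◁ a) = η(a) S k`,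
and `S k ≠ 0` forces `ρ = η`.

Both facts are convolution arguments. The action is a coalgebra map `A ⊗ H → A`, so `S ∘ act` is a
convolution inverse of it; multiplicativity of the action makes `act ∘ (S ⊗ id)` another one.
For the cointegrals, `(S x ⊗ 1) Δh = (1 ⊗ x) Δh` shows that the right legs of `Δh` span a left
ideal, which contains `1`; by a rank count some functional `g` then has `(id ⊗ g) Δh = 1`, and
applying `id ⊗ g` to `(S k ⊗ 1) Δh = h ⊗ k` gives `S k = g(k) h`.
-/

open Coalgebra WithConv

section Presentations

variable {R : Type*} [CommSemiring R]

theorem TensorProduct.exists_fin_sum_tmul {M N : Type*} [AddCommMonoid M] [AddCommMonoid N]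
    [Module R M] [Module R N] (x : M ⊗[R] N) :
    ∃ (n : ℕ) (f : Fin n → M) (g : Fin n → N), x = ∑ i, f i ⊗ₜ g i := by
  obtain ⟨S, rfl⟩ := exists_finset x
  refine ⟨S.card, fun i => (S.equivFin.symm i).1.1, fun i => (S.equivFin.symm i).1.2, ?_⟩
  rw [← Finset.sum_coe_sort S, ← S.equivFin.symm.sum_comp]

theorem LinearMap.convMul_apply_of_forall_fin {C A : Type*} [AddCommMonoid C] [Module R C]
    [CoalgebraStruct R C] [Semiring A] [Algebra R A] {f g : C →ₗ[R] A} {c : C} {x : A}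
    (hx : ∀ (n : ℕ) (c₁ c₂ : Fin n → C), comul (R := R) c = ∑ i, c₁ i ⊗ₜ c₂ i →
      x = ∑ i, f (c₁ i) * g (c₂ i)) :
    (toConv f * toConv g) c = x := by
  obtain ⟨n, c₁, c₂, hc⟩ := exists_fin_sum_tmul (comul (R := R) c)
  simp [hx n c₁ c₂ hc, hc, map_sum]

variable {M N P : Type*} [AddCommMonoid M] [Module R M] [CoalgebraStruct R M]
  [AddCommMonoid N] [Module R N] [CoalgebraStruct R N] [AddCommMonoid P] [Module R P]

theorem map_comul_tmul_of_forall_fin (φ : M ⊗[R] N →ₗ[R] P) (m : M) (n : N) {y : P ⊗[R] P}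
    (hy : ∀ (k : ℕ) (n₁ n₂ : Fin k → N) (l : ℕ) (m₁ m₂ : Fin l → M),
      comul (R := R) n = ∑ i, n₁ i ⊗ₜ n₂ i → comul (R := R) m = ∑ j, m₁ j ⊗ₜ m₂ j →
      y = ∑ j, ∑ i, φ (m₁ j ⊗ₜ n₁ i) ⊗ₜ φ (m₂ j ⊗ₜ n₂ i)) :
    map φ φ (comul (m ⊗ₜ n)) = y := by
  obtain ⟨k, n₁, n₂, hn⟩ := exists_fin_sum_tmul (comul (R := R) n)
  obtain ⟨l, m₁, m₂, hm⟩ := exists_fin_sum_tmul (comul (R := R) m)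
  simp only [hy k n₁ n₂ l m₁ m₂ hn hm, TensorProduct.comul_tmul, hn, hm, sum_tmul, tmul_sum,
    map_sum, AlgebraTensorModule.tensorTensorTensorComm_tmul, map_tmul]
  exact Finset.sum_comm

noncomputable def CoalgHom.ofTmul [CoalgebraStruct R P] (φ : M ⊗[R] N →ₗ[R] P)
    (hcounit : ∀ m n, counit (R := R) (φ (m ⊗ₜ n)) = counit (R := R) m * counit (R := R) n)
    (hcomul : ∀ m n, map φ φ (comul (m ⊗ₜ n)) = comul (R := R) (φ (m ⊗ₜ n))) :
    M ⊗[R] N →ₗc[R] P where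
  toLinearMap := φ
  counit_comp := TensorProduct.ext' fun m n => by simp [hcounit, mul_comm]
  map_comp_comul := TensorProduct.ext' hcomul

end Presentations

namespace TensorProduct

variable {K V W : Type*} [Field K] [AddCommGroup V] [Module K V] [AddCommGroup W] [Module K W]

/-- `sliceLeft t f = (f ⊗ id) t`. -/
noncomputable def sliceLeft : V ⊗[K] W →ₗ[K] Module.Dual K V →ₗ[K] W :=
  (LinearMap.rTensorHom W).flip.compr₂ (TensorProduct.lid K W).toLinearMap

/-- `sliceRight t g = (id ⊗ g) t`. -/
noncomputable def sliceRight : V ⊗[K] W →ₗ[K] Module.Dual K W →ₗ[K] V :=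
  (LinearMap.lTensorHom V).flip.compr₂ (TensorProduct.rid K V).toLinearMap

@[simp]
theorem sliceLeft_tmul (v : V) (w : W) (f : Module.Dual K V) :
    sliceLeft (v ⊗ₜ w) f = f v • w := by
  simp [sliceLeft]

@[simp]
theorem sliceRight_tmul (v : V) (w : W) (g : Module.Dual K W) :
    sliceRight (v ⊗ₜ w) g = g w • v := by
  simp [sliceRight]

theorem apply_sliceLeft (t : V ⊗[K] W) (f : Module.Dual K V) (g : Module.Dual K W) :
    g (sliceLeft t f) = f (sliceRight t g) := by
  induction t using TensorProduct.induction_on with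
  | zero => simp
  | tmul v w => simp [mul_comm]
  | add t t' ht ht' => simp [ht, ht']

theorem surjective_sliceRight [FiniteDimensional K V] [FiniteDimensional K W]
    (hdim : Module.finrank K V = Module.finrank K W) {t : V ⊗[K] W}
    (ht : Function.Surjective (sliceLeft t)) : Function.Surjective (sliceRight t) := by
  refine (LinearMap.injective_iff_surjective_of_finrank_eq_finrank
    (by rw [Subspace.dual_finrank_eq, hdim])).mp ?_
  refine (injective_iff_map_eq_zero _).mpr fun g hg => LinearMap.ext fun w => ?_
  obtain ⟨f, rfl⟩ := ht w
  simp [apply_sliceLeft, hg]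

section Algebra

variable {A : Type*} [Ring A] [Algebra K A]

theorem mul'_rTensor_mem {I : Submodule K A} (hI : ∀ a, ∀ x ∈ I, a * x ∈ I) {t : V ⊗[K] A}
    (ht : ∀ f, sliceLeft t f ∈ I) (m : V →ₗ[K] A) : LinearMap.mul' K A (m.rTensor A t) ∈ I := by
  classical
  let B := Module.Free.chooseBasis K V
  rw [← (equivFinsuppOfBasisLeft B).symm_apply_apply t, equivFinsuppOfBasisLeft_symm_apply,
    Finsupp.sum, map_sum, map_sum]
  refine Submodule.sum_mem _ fun i _ => ?_
  rw [equivFinsuppOfBasisLeft_apply]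
  simpa [sliceLeft] using hI _ _ (ht (B.coord i))

theorem sliceLeft_tmul_one_mul (a : A) (t : A ⊗[K] A) (f : Module.Dual K A) :
    sliceLeft ((a ⊗ₜ 1) * t) f = sliceLeft t (f ∘ₗ LinearMap.mulLeft K a) := by
  induction t using TensorProduct.induction_on with
  | zero => simp
  | tmul x y => simp
  | add t t' ht ht' => simp [mul_add, ht, ht']

theorem sliceLeft_one_tmul_mul (a : A) (t : A ⊗[K] A) (f : Module.Dual K A) :
    sliceLeft ((1 ⊗ₜ a) * t) f = a * sliceLeft t f := by
  induction t using TensorProduct.induction_on with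
  | zero => simp
  | tmul x y => simp
  | add t t' ht ht' => simp [mul_add, ht, ht']

theorem sliceRight_tmul_one_mul (a : A) (t : A ⊗[K] A) (g : Module.Dual K A) :
    sliceRight ((a ⊗ₜ 1) * t) g = a * sliceRight t g := by
  induction t using TensorProduct.induction_on with
  | zero => simp
  | tmul x y => simp
  | add t t' ht ht' => simp [mul_add, ht, ht']

end Algebra

end TensorProduct

section Convolution

variable {R C A : Type*} [CommSemiring R] [AddCommMonoid C] [Module R C] [Coalgebra R C]
  [Semiring A] [HopfAlgebra R A]

theorem sum_counit_right_smul {c : C} {ι : Type*} (𝓡 : Repr R c ι) :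
    ∑ i ∈ 𝓡.index, counit (R := R) (𝓡.right i) • 𝓡.left i = c := by
  have := congrArg (TensorProduct.rid R C) (sum_tmul_counit_eq 𝓡)
  simpa only [map_sum, rid_tmul, one_smul] using this

theorem antipode_comp_convMul_self (φ : C →ₗc[R] A) :
    toConv (HopfAlgebra.antipode R ∘ₗ φ.toLinearMap) * toConv φ.toLinearMap = 1 := by
  have := LinearMap.convMul_comp_coalgHom_distrib
    (toConv (HopfAlgebra.antipode R)) (toConv (LinearMap.id : A →ₗ[R] A)) φ
  rw [LinearMap.antipode_mul_id] at this
  ext c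
  simpa using (LinearMap.congr_fun this c).symm

theorem convMul_antipode_comp_self (φ : C →ₗc[R] A) :
    toConv φ.toLinearMap * toConv (HopfAlgebra.antipode R ∘ₗ φ.toLinearMap) = 1 := by
  have := LinearMap.convMul_comp_coalgHom_distrib
    (toConv (LinearMap.id : A →ₗ[R] A)) (toConv (HopfAlgebra.antipode R)) φ
  rw [LinearMap.id_mul_antipode] at this
  ext c
  simpa using (LinearMap.congr_fun this c).symm

theorem antipode_tmul_one_convMul_comul :
    toConv ((Algebra.TensorProduct.includeLeft : A →ₐ[R] A ⊗[R] A).toLinearMap ∘ₗ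
      HopfAlgebra.antipode R) * toConv (comul : A →ₗ[R] A ⊗[R] A) =
    toConv (Algebra.TensorProduct.includeRight : A →ₐ[R] A ⊗[R] A).toLinearMap := by
  have hinv : toConv ((Algebra.TensorProduct.includeLeft : A →ₐ[R] A ⊗[R] A).toLinearMap ∘ₗ
      HopfAlgebra.antipode R) *
      toConv (Algebra.TensorProduct.includeLeft : A →ₐ[R] A ⊗[R] A).toLinearMap = 1 := by
    have := LinearMap.algHom_comp_convMul_distrib
      (Algebra.TensorProduct.includeLeft : A →ₐ[R] A ⊗[R] A)
      (toConv (HopfAlgebra.antipode R)) (toConv (LinearMap.id : A →ₗ[R] A))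
    rw [LinearMap.antipode_mul_id] at this
    ext x
    simpa using (LinearMap.congr_fun this x).symm
  have hcomul : toConv (Algebra.TensorProduct.includeLeft : A →ₐ[R] A ⊗[R] A).toLinearMap *
      toConv (Algebra.TensorProduct.includeRight : A →ₐ[R] A ⊗[R] A).toLinearMap =
      toConv (comul : A →ₗ[R] A ⊗[R] A) := by
    have hid : LinearMap.mul' R (A ⊗[R] A) ∘ₗ
        map (Algebra.TensorProduct.includeLeft : A →ₐ[R] A ⊗[R] A).toLinearMap
          (Algebra.TensorProduct.includeRight : A →ₐ[R] A ⊗[R] A).toLinearMap = LinearMap.id :=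
      TensorProduct.ext' fun a b => by simp
    ext x
    exact LinearMap.congr_fun hid (comul x)
  rw [← hcomul, ← mul_assoc, hinv, one_mul]

end Convolution

section ModuleBialgebra

variable {R A H : Type*} [CommSemiring R] [Semiring A] [HopfAlgebra R A]
  [AddCommMonoid H] [Module R H] [Coalgebra R H] (act : A ⊗[R] H →ₗc[R] A)

theorem toConv_curry_one (act_mul : ∀ b b' : A, toConv (curry act.toLinearMap (b * b')) =
      toConv (curry act.toLinearMap b) * toConv (curry act.toLinearMap b')) :
    toConv (curry act.toLinearMap 1) = 1 := by
  let u : H →ₗc[R] A := act.comp <| (Coalgebra.TensorProduct.map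
    (Bialgebra.unitBialgHom R A : R →ₗc[R] A) (CoalgHom.id R H)).comp
    (Coalgebra.TensorProduct.lid R H).symm.toCoalgHom
  have hu : u.toLinearMap = curry act.toLinearMap 1 := by
    ext a
    simp [u]
  have idem : toConv u.toLinearMap * toConv u.toLinearMap = toConv u.toLinearMap := by
    rw [hu, ← act_mul, one_mul]
  rw [← hu]
  calc toConv u.toLinearMap
      = toConv (HopfAlgebra.antipode R ∘ₗ u.toLinearMap) * toConv u.toLinearMap *
          toConv u.toLinearMap := by rw [antipode_comp_convMul_self, one_mul]
    _ = 1 := by rw [mul_assoc, idem, antipode_comp_convMul_self]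

theorem comp_antipode_rTensor_convMul_self
    (act_mul : ∀ b b' : A, toConv (curry act.toLinearMap (b * b')) =
      toConv (curry act.toLinearMap b) * toConv (curry act.toLinearMap b')) :
    toConv (act.toLinearMap ∘ₗ (HopfAlgebra.antipode R).rTensor H) *
      toConv act.toLinearMap = 1 := by
  ext b a
  have hone : act (1 ⊗ₜ a) = algebraMap R A (counit a) :=
    LinearMap.congr_fun (congrArg ofConv (toConv_curry_one act act_mul)) a
  simp only [AlgebraTensorModule.curry_apply, curry_apply, LinearMap.restrictScalars_self,
    LinearMap.convMul_apply, TensorProduct.comul_tmul, ← (ℛ R b).eq, ← (ℛ R a).eq, sum_tmul,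
    tmul_sum, map_sum, AlgebraTensorModule.tensorTensorTensorComm_tmul, map_tmul,
    LinearMap.mul'_apply, LinearMap.comp_apply, LinearMap.rTensor_tmul]
  rw [Finset.sum_comm]
  calc ∑ j ∈ (ℛ R b).index, ∑ i ∈ (ℛ R a).index,
        act (HopfAlgebra.antipode R ((ℛ R b).left j) ⊗ₜ (ℛ R a).left i) *
          act ((ℛ R b).right j ⊗ₜ (ℛ R a).right i)
      = ∑ j ∈ (ℛ R b).index,
          act ((HopfAlgebra.antipode R ((ℛ R b).left j) * (ℛ R b).right j) ⊗ₜ a) := by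
        refine Finset.sum_congr rfl fun j _ => ?_
        have := LinearMap.congr_fun (congrArg ofConv
          (act_mul (HopfAlgebra.antipode R ((ℛ R b).left j)) ((ℛ R b).right j))) a
        rw [(ℛ R a).convMul_apply] at this
        exact this.symm
    _ = counit b • act (1 ⊗ₜ a) := by
        rw [← map_sum, ← sum_tmul, HopfAlgebra.sum_antipode_mul_eq_smul, ← smul_tmul', map_smul]
    _ = _ := by
        rw [hone, LinearMap.convOne_apply, TensorProduct.counit_tmul, smul_eq_mul, mul_comm,
          map_mul, Algebra.smul_def]

theorem act_antipode_tmul (act_mul : ∀ b b' : A, toConv (curry act.toLinearMap (b * b')) =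
      toConv (curry act.toLinearMap b) * toConv (curry act.toLinearMap b'))
    (b : A) (a : H) :
    act (HopfAlgebra.antipode R b ⊗ₜ a) = HopfAlgebra.antipode R (act (b ⊗ₜ a)) := by
  have := left_inv_eq_right_inv (comp_antipode_rTensor_convMul_self act act_mul)
    (convMul_antipode_comp_self act)
  exact LinearMap.congr_fun (congrArg ofConv this) (b ⊗ₜ a)

end ModuleBialgebra

section Cointegral

variable {K A : Type*} [Field K] [Ring A] [HopfAlgebra K A] {h : A}

theorem antipode_tmul_one_mul_comul (hh : ∀ b : A, b * h = counit (R := K) b • h) (x : A) :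
    (HopfAlgebra.antipode K x ⊗ₜ 1) * comul (R := K) h = (1 ⊗ₜ x) * comul (R := K) h := by
  have hS := LinearMap.congr_fun (congrArg ofConv
    (antipode_tmul_one_convMul_comul (R := K) (A := A))) x
  rw [(ℛ K x).convMul_apply] at hS
  calc (HopfAlgebra.antipode K x ⊗ₜ 1) * comul (R := K) h
      = ∑ i ∈ (ℛ K x).index, (HopfAlgebra.antipode K ((ℛ K x).left i) ⊗ₜ 1) *
          comul (R := K) ((ℛ K x).right i * h) := by
        conv_lhs => rw [← sum_counit_right_smul (ℛ K x)]
        simp only [map_sum, map_smul, sum_tmul, ← smul_tmul', Finset.sum_mul, smul_mul_assoc, hh,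
          mul_smul_comm]
    _ = (∑ i ∈ (ℛ K x).index, (HopfAlgebra.antipode K ((ℛ K x).left i) ⊗ₜ 1) *
          comul (R := K) ((ℛ K x).right i)) * comul (R := K) h := by
        simp only [Bialgebra.comul_mul, mul_assoc, Finset.sum_mul]
    _ = (1 ⊗ₜ x) * comul (R := K) h := by
        simpa using congrArg (· * comul (R := K) h) hS

theorem one_tmul_mul_comul {k : A} (hk : ∀ b : A, k * b = counit (R := K) b • k) :
    (1 ⊗ₜ k) * comul (R := K) h = h ⊗ₜ k := by
  calc (1 ⊗ₜ k) * comul (R := K) h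
      = ∑ i ∈ (ℛ K h).index, (ℛ K h).left i ⊗ₜ (k * (ℛ K h).right i) := by
        rw [← (ℛ K h).eq, Finset.mul_sum]
        simp
    _ = h ⊗ₜ k := by
        simp only [hk, tmul_smul, smul_tmul', ← sum_tmul, sum_counit_right_smul]

theorem surjective_sliceLeft_comul (hh : ∀ b : A, b * h = counit (R := K) b • h) (h0 : h ≠ 0) :
    Function.Surjective (sliceLeft (comul (R := K) h)) := by
  let I := LinearMap.range (sliceLeft (comul (R := K) h))
  have hI : ∀ a, ∀ x ∈ I, a * x ∈ I := by
    rintro a _ ⟨f, rfl⟩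
    refine ⟨f ∘ₗ LinearMap.mulLeft K (HopfAlgebra.antipode K a), ?_⟩
    rw [← sliceLeft_tmul_one_mul, antipode_tmul_one_mul_comul hh, sliceLeft_one_tmul_mul]
  obtain ⟨φ, hφ⟩ := Module.Projective.exists_dual_ne_zero K h0
  let φ₁ : A →ₗ[K] A := Algebra.linearMap K A ∘ₗ φ
  -- At `h` this reads `Σ φ(h₁) S(h₂) h₃ = φ(h) 1`; associativity of convolution does the
  -- coassociativity.
  have hφ₁ : toConv φ₁ * toConv (HopfAlgebra.antipode K) * toConv LinearMap.id = toConv φ₁ := by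
    rw [mul_assoc, LinearMap.antipode_mul_id, mul_one]
  have hone : φ h • (1 : A) ∈ I := by
    convert mul'_rTensor_mem hI (fun f => ⟨f, rfl⟩)
      (toConv φ₁ * toConv (HopfAlgebra.antipode K)).ofConv using 1
    rw [← Algebra.algebraMap_eq_smul_one]
    exact (LinearMap.congr_fun (congrArg ofConv hφ₁) h).symm
  intro x
  have := hI x _ (I.smul_mem (φ h)⁻¹ hone)
  rwa [smul_smul, inv_mul_cancel₀ hφ, one_smul, mul_one] at this

theorem exists_antipode_eq_smul [FiniteDimensional K A]
    (hh : ∀ b : A, b * h = counit (R := K) b • h) (h0 : h ≠ 0)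
    {k : A} (hk : ∀ b : A, k * b = counit (R := K) b • k) (k0 : k ≠ 0) :
    ∃ c : K, c ≠ 0 ∧ HopfAlgebra.antipode K k = c • h := by
  have key : (HopfAlgebra.antipode K k ⊗ₜ 1) * comul (R := K) h = h ⊗ₜ k :=
    (antipode_tmul_one_mul_comul hh k).trans (one_tmul_mul_comul hk)
  obtain ⟨g, hg⟩ := surjective_sliceRight rfl (surjective_sliceLeft_comul hh h0) 1
  have hSk : HopfAlgebra.antipode K k = g k • h := by
    simpa [sliceRight_tmul_one_mul, hg] using congrArg (fun t => sliceRight t g) key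
  refine ⟨g k, fun hc => ?_, hSk⟩
  obtain ⟨g', hg'⟩ := Module.Projective.exists_dual_ne_zero K k0
  have hhk : h ⊗ₜ[K] k = 0 := by rw [← key, hSk, hc, zero_smul, zero_tmul, zero_mul]
  simpa [hg', h0] using congrArg (fun t => sliceRight t g') hhk

end Cointegral

theorem stmt_7_general (K A H : Type*) [Field K]
    [Ring A] [HopfAlgebra K A] [FiniteDimensional K A]
    [Ring H] [HopfAlgebra K H]
    (act : A ⊗[K] H →ₗ[K] A)
    (act_alg : ∀ (b b' : A) (a : H) (n : ℕ) (a₁ a₂ : Fin n → H),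
      Coalgebra.comul (R := K) a = ∑ i, a₁ i ⊗ₜ[K] a₂ i →
      act ((b * b') ⊗ₜ[K] a) = ∑ i, act (b ⊗ₜ[K] a₁ i) * act (b' ⊗ₜ[K] a₂ i))
    (act_comul : ∀ (b : A) (a : H) (n : ℕ) (a₁ a₂ : Fin n → H) (m : ℕ) (b₁ b₂ : Fin m → A),
      Coalgebra.comul (R := K) a = ∑ i, a₁ i ⊗ₜ[K] a₂ i →
      Coalgebra.comul (R := K) b = ∑ j, b₁ j ⊗ₜ[K] b₂ j →
      Coalgebra.comul (R := K) (act (b ⊗ₜ[K] a)) =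
        ∑ j, ∑ i, act (b₁ j ⊗ₜ[K] a₁ i) ⊗ₜ[K] act (b₂ j ⊗ₜ[K] a₂ i))
    (act_counit : ∀ (b : A) (a : H),
      Coalgebra.counit (R := K) (act (b ⊗ₜ[K] a)) =
        Coalgebra.counit (R := K) b * Coalgebra.counit (R := K) a)
    (h : A) (h_ne : h ≠ 0)
    (h_coint : ∀ b : A, b * h = Coalgebra.counit (R := K) b • h)
    (k : A) (k_ne : k ≠ 0)
    (k_coint : ∀ b : A, k * b = Coalgebra.counit (R := K) b • k)
    (ρ η : H → K)
    (hρ : ∀ a : H, act (h ⊗ₜ[K] a) = ρ a • h)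
    (hη : ∀ a : H, act (k ⊗ₜ[K] a) = η a • k) :
    ρ = η := by
  let φ : A ⊗[K] H →ₗc[K] A := CoalgHom.ofTmul act act_counit fun b a =>
    map_comul_tmul_of_forall_fin act b a (act_comul b a)
  have hmul : ∀ b b' : A, toConv (curry act (b * b')) =
      toConv (curry act b) * toConv (curry act b') := fun b b' =>
    WithConv.ext <| LinearMap.ext fun a =>
      (LinearMap.convMul_apply_of_forall_fin (act_alg b b' a)).symm
  obtain ⟨c, hc, hSk⟩ := exists_antipode_eq_smul h_coint h_ne k_coint k_ne
  funext a
  have hS : act (HopfAlgebra.antipode K k ⊗ₜ a) = HopfAlgebra.antipode K (act (k ⊗ₜ a)) :=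
    act_antipode_tmul φ hmul k a
  rw [hη, map_smul, hSk, ← smul_tmul', map_smul, hρ, smul_smul, smul_smul] at hS
  exact mul_left_cancel₀ hc ((smul_left_injective K h_ne hS).trans (mul_comm _ _))

/-- Let `H`, `A` be Hopf algebras over a field `K`, with `A` finite
dimensional, and let `A` be a right `H`-module *bialgebra* via `act` (compatible with
multiplication, comultiplication and counit).  If `h` is a left cointegral with
`h ◁ a = ρ(a) h` and `k` a right cointegral with `k ◁ a = η(a) k`, then `ρ = η`. -/
theorem stmt_7 (K A H : Type*) [Field K]
    [Ring A] [HopfAlgebra K A] [FiniteDimensional K A]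
    [Ring H] [HopfAlgebra K H]
    (act : A ⊗[K] H →ₗ[K] A)
    (act_one : ∀ b : A, act (b ⊗ₜ[K] 1) = b)
    (act_mul : ∀ (b : A) (a a' : H),
      act (act (b ⊗ₜ[K] a) ⊗ₜ[K] a') = act (b ⊗ₜ[K] (a * a')))
    (act_alg : ∀ (b b' : A) (a : H) (n : ℕ) (a₁ a₂ : Fin n → H),
      Coalgebra.comul (R := K) a = ∑ i, a₁ i ⊗ₜ[K] a₂ i →
      act ((b * b') ⊗ₜ[K] a) = ∑ i, act (b ⊗ₜ[K] a₁ i) * act (b' ⊗ₜ[K] a₂ i))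
    (act_comul : ∀ (b : A) (a : H) (n : ℕ) (a₁ a₂ : Fin n → H) (m : ℕ) (b₁ b₂ : Fin m → A),
      Coalgebra.comul (R := K) a = ∑ i, a₁ i ⊗ₜ[K] a₂ i →
      Coalgebra.comul (R := K) b = ∑ j, b₁ j ⊗ₜ[K] b₂ j →
      Coalgebra.comul (R := K) (act (b ⊗ₜ[K] a)) =
        ∑ j, ∑ i, act (b₁ j ⊗ₜ[K] a₁ i) ⊗ₜ[K] act (b₂ j ⊗ₜ[K] a₂ i))
    (act_counit : ∀ (b : A) (a : H),
      Coalgebra.counit (R := K) (act (b ⊗ₜ[K] a)) =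
        Coalgebra.counit (R := K) b * Coalgebra.counit (R := K) a)
    (h : A) (h_ne : h ≠ 0)
    (h_coint : ∀ b : A, b * h = Coalgebra.counit (R := K) b • h)
    (k : A) (k_ne : k ≠ 0)
    (k_coint : ∀ b : A, k * b = Coalgebra.counit (R := K) b • k)
    (ρ η : H → K)
    (hρ : ∀ a : H, act (h ⊗ₜ[K] a) = ρ a • h)
    (hη : ∀ a : H, act (k ⊗ₜ[K] a) = η a • k) :
    ρ = η :=
  stmt_7_general K A H act act_alg act_comul act_counit h h_ne h_coint k k_ne k_coint ρ η hρ hη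
end

section
/- In the setting of the previous statement, the element y ∈ B defined by (ι ⊗ φ)Γ(a) = φ(a) y is group-like: Δ_B(y) = y ⊗ y, ε_B(y) = 1, and S_B(y) = y⁻¹ (in particular y is invertible). -/
open TensorProduct

/-- In the setting of Statement 9, the element `y ∈ B` defined by
`(ι ⊗ φ)Γ(a) = φ(a) y` is group-like: `Δ_B(y) = y ⊗ y`, `ε_B(y) = 1`, and
`S_B(y) = y⁻¹` (in particular `y` is invertible). -/
theorem stmt_10 (K A B : Type*) [Field K]
    [Ring A] [HopfAlgebra K A] [FiniteDimensional K A]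
    [Ring B] [HopfAlgebra K B] [FiniteDimensional K B]
    (Γ : A →ₗ[K] B ⊗[K] A)
    (coact_counit : ∀ a : A,
      (TensorProduct.lid K A) ((LinearMap.rTensor A (Coalgebra.counit (R := K) (A := B))) (Γ a))
        = a)
    (coact_coassoc : ∀ a : A,
      (TensorProduct.assoc K B B A)
          ((LinearMap.rTensor A (Coalgebra.comul (R := K) (A := B))) (Γ a))
        = (LinearMap.lTensor B Γ) (Γ a))
    (comod_coalg : ∀ (a : A) (n : ℕ) (x y : Fin n → A),
      Coalgebra.comul (R := K) a = ∑ i, x i ⊗ₜ[K] y i →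
      (LinearMap.lTensor B (Coalgebra.comul (R := K) (A := A))) (Γ a) =
        ∑ i, ((TensorProduct.assoc K B A A) ((Γ (x i)) ⊗ₜ[K] (1 : A))) *
          ((LinearMap.lTensor B ((TensorProduct.mk K A A) 1)) (Γ (y i))))
    (comod_counit : ∀ a : A,
      (TensorProduct.rid K B) ((LinearMap.lTensor B (Coalgebra.counit (R := K) (A := A))) (Γ a))
        = Coalgebra.counit (R := K) a • (1 : B))
    (φ : A →ₗ[K] K) (hφ : φ ≠ 0)
    (hleft : ∀ a : A,
      (TensorProduct.rid K A) ((LinearMap.lTensor A φ) (Coalgebra.comul (R := K) a)) = φ a • 1) :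
    ∀ y : B,
      (∀ a : A, (TensorProduct.rid K B) ((LinearMap.lTensor B φ) (Γ a)) = φ a • y) →
      Coalgebra.comul (R := K) y = y ⊗ₜ[K] y ∧
      Coalgebra.counit (R := K) y = 1 ∧
      HopfAlgebra.antipode (R := K) y * y = 1 ∧
      y * HopfAlgebra.antipode (R := K) y = 1 := by
  intro y hy
  obtain ⟨a, ha⟩ := DFunLike.ne_iff.mp hφ
  simp only [LinearMap.zero_apply] at ha
  set f : B ⊗[K] A →ₗ[K] B :=
    (TensorProduct.rid K B).toLinearMap ∘ₗ LinearMap.lTensor B φ with hf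
  have hfΓ : ∀ a : A, f (Γ a) = φ a • y := hy
  -- counit
  have hε : Coalgebra.counit (R := K) y = 1 := by
    have key : ∀ x : B ⊗[K] A,
        Coalgebra.counit (R := K) (f x)
          = φ ((TensorProduct.lid K A)
              ((LinearMap.rTensor A (Coalgebra.counit (R := K) (A := B))) x)) := by
      intro x
      induction x using TensorProduct.induction_on with
      | zero => simp
      | tmul b a' => simp [f, TensorProduct.smul_tmul', mul_comm]
      | add u v hu hv => simp [map_add, hu, hv]
    have h1 := key (Γ a)
    rw [hfΓ, coact_counit, map_smul, smul_eq_mul] at h1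
    have := mul_left_cancel₀ ha (h1.trans (mul_one (φ a)).symm)
    exact this
  -- comul
  have hΔ : Coalgebra.comul (R := K) y = y ⊗ₜ[K] y := by
    have helper : ∀ (z : B ⊗[K] B) (a' : A),
        LinearMap.lTensor B f ((TensorProduct.assoc K B B A) (z ⊗ₜ[K] a')) = φ a' • z := by
      intro z a'
      induction z using TensorProduct.induction_on with
      | zero =>
        rw [TensorProduct.zero_tmul, LinearEquiv.map_zero, map_zero, smul_zero]
      | tmul b1 b2 =>
        rw [TensorProduct.assoc_tmul, LinearMap.lTensor_tmul]
        have hfb : f (b2 ⊗ₜ[K] a') = φ a' • b2 := by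
          simp [f, TensorProduct.smul_tmul']
        rw [hfb, TensorProduct.tmul_smul]
      | add u v hu hv =>
        rw [add_tmul, map_add, map_add, hu, hv, smul_add]
    have keyL : ∀ x : B ⊗[K] A,
        LinearMap.lTensor B f ((TensorProduct.assoc K B B A)
          ((LinearMap.rTensor A (Coalgebra.comul (R := K) (A := B))) x))
          = Coalgebra.comul (R := K) (f x) := by
      intro x
      induction x using TensorProduct.induction_on with
      | zero => simp only [LinearEquiv.map_zero, LinearMap.map_zero]
      | tmul b a' =>
        rw [LinearMap.rTensor_tmul, helper]
        have hfb : f (b ⊗ₜ[K] a') = φ a' • b := by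
          simp [f, TensorProduct.smul_tmul']
        rw [hfb, map_smul]
      | add u v hu hv => simp only [map_add, hu, hv]
    have keyR : ∀ x : B ⊗[K] A,
        LinearMap.lTensor B f ((LinearMap.lTensor B Γ) x)
          = (TensorProduct.mk K B B) (f x) y := by
      intro x
      induction x using TensorProduct.induction_on with
      | zero => simp
      | tmul b a' =>
        simp only [LinearMap.lTensor_tmul, hfΓ, TensorProduct.mk_apply]
        simp [f, TensorProduct.smul_tmul', TensorProduct.tmul_smul]
      | add u v hu hv => simp only [map_add, hu, hv, LinearMap.add_apply]
    have h2 := congrArg (LinearMap.lTensor B f) (coact_coassoc a)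
    rw [keyL, keyR, hfΓ] at h2
    simp only [map_smul, TensorProduct.mk_apply, TensorProduct.smul_tmul'] at h2
    exact smul_right_injective (B ⊗[K] B) ha h2
  refine ⟨hΔ, hε, ?_, ?_⟩
  · have := HopfAlgebra.mul_antipode_rTensor_comul_apply (R := K) y
    rw [hΔ, hε] at this
    simpa using this
  · have := HopfAlgebra.mul_antipode_lTensor_comul_apply (R := K) y
    rw [hΔ, hε] at this
    simpa using this
end

section
/- In the setting of the previous statement, with Δ_#(a # b) = Σ (a₁ # 1)Γ(a₂)Δ_B(b), i.e. Δ_#(a # b) = Σ (a₁ # S(a₂)a₄ b₂) ⊗ (a₃ # b₁), the isomorphism θ(a ⊗ b) = Σ a₁ # S(a₂)b is also a coalgebra map: Δ_#(θ(a ⊗ b)) = Σ θ(a₁ ⊗ b₂) ⊗ θ(a₂ ⊗ b₁), where Δ_A(a) = Σ a₁ ⊗ a₂ and Δ_B(b) = Σ b₂ ⊗ b₁ (since B = A^cop). Hence the bicrossproduct A # B is isomorphic as a Hopf algebra to the tensor product Hopf algebra A ⊗ A^cop. -/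
/-!
Everything takes place in the convolution monoid of linear maps `A → (A ⊗ A) ⊗ (A ⊗ A)`.
With `e₁, …, e₄` the inclusions of the four tensor factors, the smash coproduct factors as
`Δ_#(a ⊗ b) = P(a) Q(b)` with `P = e₁ * e₂S * e₃ * e₂` and `Q = e₄ * e₂` an algebra map
(`b ↦ Σ (1 ⊗ b₂) ⊗ (1 ⊗ b₁)`), while `θ(a ⊗ b) = T(a) (1 ⊗ b)` with `T = ι₁ * ι₂S`
in the convolution monoid of maps `A → A ⊗ A`.
Hence `Δ_#(θ(a ⊗ b)) = (P * QS)(a) Q(b)`. Post-composing the antipode with an algebra map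
gives its convolution inverse, so `e₄S * e₄ = 1 = Q * QS` and
`P * QS = e₁ * e₂S * e₃ * e₄S * Q * QS = (e₁ * e₂S) * (e₃ * e₄S)`,
which is `a ↦ Σ T(a₁) ⊗ T(a₂)`.
-/

open TensorProduct Coalgebra HopfAlgebra WithConv
open Algebra.TensorProduct (includeLeft includeRight)

namespace TensorProduct

variable {R M N P Q : Type*} [CommSemiring R] [AddCommMonoid M] [Module R M]
  [AddCommMonoid N] [Module R N] [AddCommMonoid P] [Module R P] [AddCommMonoid Q] [Module R Q]

theorem exists_sum_tmul_eq_of_forall {ι : Type*} (φ : ι → N)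
    (hφ : ∀ y : N, ∃ (k : ℕ) (g : Fin k → ι), y = ∑ j, φ (g j)) (x : M ⊗[R] N) :
    ∃ (k : ℕ) (m : Fin k → M) (g : Fin k → ι), x = ∑ j, m j ⊗ₜ φ (g j) := by
  induction x with
  | zero => exact ⟨0, finZeroElim, finZeroElim, by simp⟩
  | tmul m y =>
    obtain ⟨k, g, rfl⟩ := hφ y
    exact ⟨k, fun _ ↦ m, g, tmul_sum _ _ _⟩
  | add x y hx hy =>
    obtain ⟨kx, mx, gx, rfl⟩ := hx
    obtain ⟨ky, my, gy, rfl⟩ := hy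
    exact ⟨kx + ky, Fin.addCases mx my, Fin.addCases gx gy, by simp [Fin.sum_univ_add]⟩

theorem exists_sum_tmul_tmul_tmul_eq (x : M ⊗[R] (N ⊗[R] (P ⊗[R] Q))) :
    ∃ (k : ℕ) (m : Fin k → M) (n : Fin k → N) (p : Fin k → P) (q : Fin k → Q),
      x = ∑ j, m j ⊗ₜ (n j ⊗ₜ (p j ⊗ₜ q j)) := by
  have hNPQ (y : N ⊗[R] (P ⊗[R] Q)) :=
    exists_sum_tmul_eq_of_forall (fun pq : P × Q ↦ pq.1 ⊗ₜ[R] pq.2) (fun z ↦ by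
      obtain ⟨k, p, q, rfl⟩ := exists_sum_tmul_eq z
      exact ⟨k, fun j ↦ (p j, q j), rfl⟩) y
  obtain ⟨k, m, g, rfl⟩ :=
    exists_sum_tmul_eq_of_forall (fun npq : N × P × Q ↦ npq.1 ⊗ₜ[R] (npq.2.1 ⊗ₜ[R] npq.2.2))
      (fun y ↦ by
        obtain ⟨k, n, g, rfl⟩ := hNPQ y
        exact ⟨k, fun j ↦ (n j, g j), rfl⟩) x
  exact ⟨k, m, fun j ↦ (g j).1, fun j ↦ (g j).2.1, fun j ↦ (g j).2.2, rfl⟩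

end TensorProduct

namespace LinearMap

section Coalgebra

variable {R C A B : Type*} [CommSemiring R] [AddCommMonoid C] [Module R C] [CoalgebraStruct R C]
  [Semiring A] [Algebra R A] [Semiring B] [Algebra R B]

lemma convMul_apply_of_comul_eq (f g : WithConv (C →ₗ[R] A)) {c : C} {n : ℕ}
    {c₁ c₂ : Fin n → C} (hc : comul c = ∑ i, c₁ i ⊗ₜ[R] c₂ i) :
    (f * g) c = ∑ i, f (c₁ i) * g (c₂ i) := by
  simp [hc]

lemma convMul_convMul_convMul_apply_of_comul_eq (f₁ f₂ f₃ f₄ : WithConv (C →ₗ[R] A)) {c : C}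
    {n : ℕ} {c₁ c₂ c₃ c₄ : Fin n → C}
    (hc : lTensor C (lTensor C comul) (lTensor C comul (comul c)) =
      ∑ i, c₁ i ⊗ₜ[R] (c₂ i ⊗ₜ[R] (c₃ i ⊗ₜ[R] c₄ i))) :
    (f₁ * (f₂ * (f₃ * f₄))) c = ∑ i, f₁ (c₁ i) * (f₂ (c₂ i) * (f₃ (c₃ i) * f₄ (c₄ i))) := by
  have h : (f₁ * (f₂ * (f₃ * f₄))).ofConv =
      mul' R A ∘ₗ lTensor A (mul' R A) ∘ₗ lTensor A (lTensor A (mul' R A)) ∘ₗ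
        map f₁.ofConv (map f₂.ofConv (map f₃.ofConv f₄.ofConv)) ∘ₗ
        lTensor C (lTensor C comul) ∘ₗ lTensor C comul ∘ₗ comul := by
    simp only [convMul_def, ofConv_toConv, coassoc_simps]
  change (f₁ * (f₂ * (f₃ * f₄))).ofConv c = _
  simp [h, hc]

lemma includeLeft_comp_convMul_includeRight_comp (f : C →ₗ[R] A) (g : C →ₗ[R] B) :
    toConv ((includeLeft : A →ₐ[R] A ⊗[R] B).toLinearMap ∘ₗ f) *
      toConv ((includeRight : B →ₐ[R] A ⊗[R] B).toLinearMap ∘ₗ g) =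
      toConv (map f g ∘ₗ comul) := by
  simp only [convMul_def, ← comp_assoc]
  congr 2
  ext
  simp

end Coalgebra

section HopfAlgebra

variable {R A B : Type*} [CommSemiring R] [Semiring A] [HopfAlgebra R A]
  [Semiring B] [Algebra R B]

lemma algHom_convMul_algHom_comp_antipode (f : A →ₐ[R] B) :
    toConv f.toLinearMap * toConv (f.toLinearMap ∘ₗ antipode R) = 1 := by
  ext a
  simp [(ℛ R a).convMul_apply, ← map_mul, ← map_sum, sum_mul_antipode_eq_algebraMap_counit]

lemma algHom_comp_antipode_convMul_algHom (f : A →ₐ[R] B) :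
    toConv (f.toLinearMap ∘ₗ antipode R) * toConv f.toLinearMap = 1 := by
  ext a
  simp [(ℛ R a).convMul_apply, ← map_mul, ← map_sum, sum_antipode_mul_eq_algebraMap_counit]

end HopfAlgebra

end LinearMap

namespace SmashProduct

open LinearMap

variable (K A : Type*) [CommSemiring K] [Semiring A] [HopfAlgebra K A]

def incl₁ : A →ₐ[K] (A ⊗[K] A) ⊗[K] (A ⊗[K] A) := includeLeft.comp includeLeft
def incl₂ : A →ₐ[K] (A ⊗[K] A) ⊗[K] (A ⊗[K] A) := includeLeft.comp includeRight
def incl₃ : A →ₐ[K] (A ⊗[K] A) ⊗[K] (A ⊗[K] A) := includeRight.comp includeLeft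
def incl₄ : A →ₐ[K] (A ⊗[K] A) ⊗[K] (A ⊗[K] A) := includeRight.comp includeRight

noncomputable def thetaOne : WithConv (A →ₗ[K] A ⊗[K] A) :=
  toConv (includeLeft : A →ₐ[K] A ⊗[K] A).toLinearMap *
    toConv ((includeRight : A →ₐ[K] A ⊗[K] A).toLinearMap ∘ₗ antipode K)

/-- `Δ_#(a ⊗ b) = smashComulLeft a * smashComulRight b`. -/
noncomputable def smashComulLeft : WithConv (A →ₗ[K] (A ⊗[K] A) ⊗[K] (A ⊗[K] A)) :=
  toConv (incl₁ K A).toLinearMap * (toConv ((incl₂ K A).toLinearMap ∘ₗ antipode K) *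
    (toConv (incl₃ K A).toLinearMap * toConv (incl₂ K A).toLinearMap))

def smashComulRight : A →ₐ[K] (A ⊗[K] A) ⊗[K] (A ⊗[K] A) :=
  (Algebra.TensorProduct.map includeRight includeRight).comp
    ((Algebra.TensorProduct.comm K A A).toAlgHom.comp (Bialgebra.comulAlgHom K A))

variable {K A}

lemma thetaOne_apply_of_comul_eq {a : A} {n : ℕ} {a₁ a₂ : Fin n → A}
    (ha : comul a = ∑ i, a₁ i ⊗ₜ[K] a₂ i) :
    thetaOne K A a = ∑ i, a₁ i ⊗ₜ[K] antipode K (a₂ i) := by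
  simp [thetaOne, convMul_apply_of_comul_eq _ _ ha]

lemma smashComulLeft_apply_of_comul_eq {a : A} {n : ℕ} {a₁ a₂ a₃ a₄ : Fin n → A}
    (ha : lTensor A (lTensor A comul) (lTensor A comul (comul a)) =
      ∑ i, a₁ i ⊗ₜ[K] (a₂ i ⊗ₜ[K] (a₃ i ⊗ₜ[K] a₄ i))) :
    smashComulLeft K A a =
      ∑ i, (a₁ i ⊗ₜ[K] (antipode K (a₂ i) * a₄ i)) ⊗ₜ[K] (a₃ i ⊗ₜ[K] 1) := by
  simp [smashComulLeft, convMul_convMul_convMul_apply_of_comul_eq _ _ _ _ ha, incl₁, incl₂, incl₃]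

lemma smashComulRight_apply_of_comul_eq {b : A} {n : ℕ} {b₁ b₂ : Fin n → A}
    (hb : comul b = ∑ i, b₁ i ⊗ₜ[K] b₂ i) :
    smashComulRight K A b = ∑ i, (1 ⊗ₜ[K] b₂ i) ⊗ₜ[K] (1 ⊗ₜ[K] b₁ i) := by
  simp [smashComulRight, hb]

lemma smashComulRight_eq_convMul :
    toConv (smashComulRight K A).toLinearMap =
      toConv (incl₄ K A).toLinearMap * toConv (incl₂ K A).toLinearMap := by
  ext b
  obtain ⟨n, b₁, b₂, hb⟩ := exists_sum_tmul_eq (comul (R := K) b)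
  simp [smashComulRight_apply_of_comul_eq hb, convMul_apply_of_comul_eq _ _ hb, incl₂, incl₄]

lemma includeLeft_comp_thetaOne :
    (includeLeft : A ⊗[K] A →ₐ[K] (A ⊗[K] A) ⊗[K] (A ⊗[K] A)).toLinearMap ∘ₗ
        (thetaOne K A).ofConv =
      (toConv (incl₁ K A).toLinearMap * toConv ((incl₂ K A).toLinearMap ∘ₗ antipode K)).ofConv :=
  algHom_comp_convMul_distrib _ _ _

lemma includeRight_comp_thetaOne :
    (includeRight : A ⊗[K] A →ₐ[K] (A ⊗[K] A) ⊗[K] (A ⊗[K] A)).toLinearMap ∘ₗ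
        (thetaOne K A).ofConv =
      (toConv (incl₃ K A).toLinearMap * toConv ((incl₄ K A).toLinearMap ∘ₗ antipode K)).ofConv :=
  algHom_comp_convMul_distrib _ _ _

lemma smashComulLeft_convMul_smashComulRight_comp_antipode :
    smashComulLeft K A * toConv ((smashComulRight K A).toLinearMap ∘ₗ antipode K) =
      toConv (map (thetaOne K A).ofConv (thetaOne K A).ofConv ∘ₗ comul) := by
  set e₁ := toConv (incl₁ K A).toLinearMap
  set e₂ := toConv (incl₂ K A).toLinearMap
  set e₃ := toConv (incl₃ K A).toLinearMap
  set e₄ := toConv (incl₄ K A).toLinearMap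
  set e₂S := toConv ((incl₂ K A).toLinearMap ∘ₗ antipode K)
  set e₄S := toConv ((incl₄ K A).toLinearMap ∘ₗ antipode K)
  set Q := toConv (smashComulRight K A).toLinearMap
  set QS := toConv ((smashComulRight K A).toLinearMap ∘ₗ antipode K)
  have hQ : Q * QS = 1 := algHom_convMul_algHom_comp_antipode _
  have h₄ : e₄S * e₄ = 1 := algHom_comp_antipode_convMul_algHom _
  calc smashComulLeft K A * QS = e₁ * (e₂S * (e₃ * (e₄S * e₄ * e₂))) * QS := by
        rw [h₄, one_mul]; rfl
    _ = e₁ * e₂S * (e₃ * e₄S) * (Q * QS) := by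
        rw [show Q = e₄ * e₂ from smashComulRight_eq_convMul]; simp only [mul_assoc]
    _ = _ := by
        rw [hQ, mul_one, ← includeLeft_comp_convMul_includeRight_comp, includeLeft_comp_thetaOne,
          includeRight_comp_thetaOne]

end SmashProduct

open LinearMap SmashProduct in
theorem stmt_12_general (K A : Type*) [Field K] [Ring A] [HopfAlgebra K A]
    (θ : A ⊗[K] A →ₗ[K] A ⊗[K] A)
    (hθ : ∀ (a b : A) (n : ℕ) (x y : Fin n → A),
      Coalgebra.comul (R := K) a = ∑ i, x i ⊗ₜ[K] y i →
      θ (a ⊗ₜ[K] b) = ∑ i, x i ⊗ₜ[K] (HopfAlgebra.antipode (R := K) (y i) * b))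
    (D : A ⊗[K] A →ₗ[K] (A ⊗[K] A) ⊗[K] (A ⊗[K] A))
    (hD : ∀ (a b : A) (n : ℕ) (x₁ x₂ x₃ x₄ : Fin n → A) (p : ℕ) (u v : Fin p → A),
      (LinearMap.lTensor A (LinearMap.lTensor A (Coalgebra.comul (R := K))))
          ((LinearMap.lTensor A (Coalgebra.comul (R := K))) (Coalgebra.comul (R := K) a)) =
        ∑ i, x₁ i ⊗ₜ[K] (x₂ i ⊗ₜ[K] (x₃ i ⊗ₜ[K] x₄ i)) →
      Coalgebra.comul (R := K) b = ∑ j, u j ⊗ₜ[K] v j →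
      D (a ⊗ₜ[K] b) =
        ∑ i, ∑ j,
          ((x₁ i) ⊗ₜ[K] (HopfAlgebra.antipode (R := K) (x₂ i) * x₄ i * v j)) ⊗ₜ[K]
            ((x₃ i) ⊗ₜ[K] (u j))) :
    ∀ (a b : A) (n : ℕ) (x y : Fin n → A) (p : ℕ) (u v : Fin p → A),
      Coalgebra.comul (R := K) a = ∑ i, x i ⊗ₜ[K] y i →
      Coalgebra.comul (R := K) b = ∑ j, u j ⊗ₜ[K] v j →
      D (θ (a ⊗ₜ[K] b)) = ∑ i, ∑ j, θ (x i ⊗ₜ[K] v j) ⊗ₜ[K] θ (y i ⊗ₜ[K] u j) := by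
  have hθ' (c d : A) : θ (c ⊗ₜ d) = thetaOne K A c * (1 ⊗ₜ d) := by
    obtain ⟨n, c₁, c₂, hc⟩ := exists_sum_tmul_eq (comul (R := K) c)
    simp [hθ c d n c₁ c₂ hc, thetaOne_apply_of_comul_eq hc, Finset.sum_mul]
  have hD' (c d : A) : D (c ⊗ₜ d) = smashComulLeft K A c * smashComulRight K A d := by
    obtain ⟨n, c₁, c₂, c₃, c₄, hc⟩ := exists_sum_tmul_tmul_tmul_eq
      (lTensor A (lTensor A comul) (lTensor A comul (comul (R := K) c)))
    obtain ⟨p, d₁, d₂, hd⟩ := exists_sum_tmul_eq (comul (R := K) d)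
    simp [hD c d n c₁ c₂ c₃ c₄ p d₁ d₂ hc hd, smashComulLeft_apply_of_comul_eq hc,
      smashComulRight_apply_of_comul_eq hd, Finset.sum_mul_sum]
  intro a b n x y p u v ha hb
  calc D (θ (a ⊗ₜ b)) = ∑ i, D (x i ⊗ₜ (antipode K (y i) * b)) := by
        rw [hθ a b n x y ha, map_sum]
    _ = (smashComulLeft K A * toConv ((smashComulRight K A).toLinearMap ∘ₗ antipode K)) a *
          smashComulRight K A b := by
        simp [hD', convMul_apply_of_comul_eq _ _ ha, Finset.sum_mul, mul_assoc]
    _ = map (thetaOne K A).ofConv (thetaOne K A).ofConv (comul a) * smashComulRight K A b := by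
        rw [smashComulLeft_convMul_smashComulRight_comp_antipode]; rfl
    _ = _ := by
        simp [ha, smashComulRight_apply_of_comul_eq hb, hθ', Finset.sum_mul, Finset.mul_sum]
        exact Finset.sum_comm

/-- In the setting of Statement 11 (with `B = A^cop`, so that
`comul_B b = Σ b₂ ⊗ b₁` when `comul_A b = Σ b₁ ⊗ b₂`), let `Δ_#` be the smash
coproduct on `A # B`, `Δ_#(a # b) = Σ (a₁ # S(a₂) a₄ b₂) ⊗ (a₃ # b₁)`, encoded by the
linear map `D`.  Then the isomorphism `θ(a ⊗ b) = Σ a₁ # S(a₂) b` is also a coalgebra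
map: `Δ_#(θ(a ⊗ b)) = Σ θ(a₁ ⊗ b₂) ⊗ θ(a₂ ⊗ b₁)`.  Hence the bicrossproduct `A # B`
is isomorphic, as a Hopf algebra, to the tensor product `A ⊗ A^cop`. -/
theorem stmt_12 (K A : Type*) [Field K] [Ring A] [HopfAlgebra K A]
    (hS : Function.Bijective (HopfAlgebra.antipode (R := K) (A := A)))
    (θ : A ⊗[K] A →ₗ[K] A ⊗[K] A)
    (hθ : ∀ (a b : A) (n : ℕ) (x y : Fin n → A),
      Coalgebra.comul (R := K) a = ∑ i, x i ⊗ₜ[K] y i →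
      θ (a ⊗ₜ[K] b) = ∑ i, x i ⊗ₜ[K] (HopfAlgebra.antipode (R := K) (y i) * b))
    (D : A ⊗[K] A →ₗ[K] (A ⊗[K] A) ⊗[K] (A ⊗[K] A))
    (hD : ∀ (a b : A) (n : ℕ) (x₁ x₂ x₃ x₄ : Fin n → A) (p : ℕ) (u v : Fin p → A),
      (LinearMap.lTensor A (LinearMap.lTensor A (Coalgebra.comul (R := K))))
          ((LinearMap.lTensor A (Coalgebra.comul (R := K))) (Coalgebra.comul (R := K) a)) =
        ∑ i, x₁ i ⊗ₜ[K] (x₂ i ⊗ₜ[K] (x₃ i ⊗ₜ[K] x₄ i)) →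
      Coalgebra.comul (R := K) b = ∑ j, u j ⊗ₜ[K] v j →
      D (a ⊗ₜ[K] b) =
        ∑ i, ∑ j,
          ((x₁ i) ⊗ₜ[K] (HopfAlgebra.antipode (R := K) (x₂ i) * x₄ i * v j)) ⊗ₜ[K]
            ((x₃ i) ⊗ₜ[K] (u j))) :
    ∀ (a b : A) (n : ℕ) (x y : Fin n → A) (p : ℕ) (u v : Fin p → A),
      Coalgebra.comul (R := K) a = ∑ i, x i ⊗ₜ[K] y i →
      Coalgebra.comul (R := K) b = ∑ j, u j ⊗ₜ[K] v j →
      D (θ (a ⊗ₜ[K] b)) = ∑ i, ∑ j, θ (x i ⊗ₜ[K] v j) ⊗ₜ[K] θ (y i ⊗ₜ[K] u j) :=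
  stmt_12_general K A θ hθ D hD
end

section
/- Let A be a finite-dimensional Hopf algebra with left integral φ_A, right integral ψ_A = φ_A ∘ S, and modular (distinguished group-like) element δ ∈ A characterized by (φ_A ⊗ ι)Δ(a) = φ_A(a)δ. With the adjoint coaction Γ(a) = Σ S(a₁)a₃ ⊗ a₂ of A^cop on A, one has (ι ⊗ φ_A)Γ(a) = φ_A(a) δ and (ι ⊗ ψ_A)Γ(a) = ψ_A(a) δ for all a ∈ A. -/
/-!
In Sweedler notation, the first identity is `Σ S(a₁) φ(a₂) a₃ = S(Σ a₁ φ(a₂)) δ = φ(a) δ`.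

The second rests on the exchange formula `S((ι ⊗ φ)(Δ(y)(1 ⊗ c))) = (ι ⊗ φ)((1 ⊗ y)Δ(c))`,
obtained by applying `ι ⊗ φ` to `Σ (S(y₁) ⊗ 1)Δ(y₂ c) = (1 ⊗ y)Δ(c)`. It shows that the right
radical of the form `(x, y) ↦ φ(xy)` is stable under the slices `(f ⊗ ι)Δ` and killed by `ε`
(as `ε(c) = Σ φ(t S(c₁) c₂)` when `φ(t) = 1`), hence is zero; in finite dimension the form is then
nondegenerate. With `ψ = φ ∘ S`, the exchange formula also gives `φ(((ψ ⊗ ι)Δa) c) = φ(aδ) φ(c)`,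
so by nondegeneracy `ψ` is a right integral with `ψ(a) = φ(aδ)`. Finally
`Σ S(a₁) ψ(a₂) a₃ = S((ι ⊗ ψ)Δa) = (ι ⊗ φ)((1 ⊗ a)Δδ) = φ(aδ) δ` since `δ` is group-like.
-/

open TensorProduct LinearMap Coalgebra HopfAlgebra

namespace TensorProduct

variable {K M N : Type*} [CommSemiring K] [AddCommMonoid M] [Module K M]
  [AddCommMonoid N] [Module K N]

lemma apply_lid_rTensor (f : M →ₗ[K] K) (g : N →ₗ[K] K) (T : M ⊗[K] N) :
    g (TensorProduct.lid K N (f.rTensor N T)) = f (TensorProduct.rid K M (g.lTensor M T)) := by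
  induction T using TensorProduct.induction_on with
  | zero => simp
  | tmul m n => simp [mul_comm]
  | add T T' h h' => simp [h, h']

lemma eq_sum_basis_tmul {ι : Type*} [Fintype ι] (b : Module.Basis ι K M) (T : M ⊗[K] N) :
    T = ∑ i, b i ⊗ₜ TensorProduct.lid K N ((b.coord i).rTensor N T) := by
  classical
  conv_lhs => rw [← (equivFinsuppOfBasisLeft b).symm_apply_apply T]
  rw [equivFinsuppOfBasisLeft_symm_apply, Finsupp.sum_fintype _ _ (by simp)]
  simp [equivFinsuppOfBasisLeft_apply]

variable {A B : Type*} [Semiring A] [Algebra K A] [Semiring B] [Algebra K B]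

lemma rid_lTensor_tmul_one_mul (f : B →ₗ[K] K) (a : A) (W : A ⊗[K] B) :
    TensorProduct.rid K A (f.lTensor A ((a ⊗ₜ 1) * W)) =
      a * TensorProduct.rid K A (f.lTensor A W) := by
  induction W using TensorProduct.induction_on with
  | zero => simp
  | tmul u v => simp [Algebra.TensorProduct.tmul_mul_tmul]
  | add W W' h h' => simp [mul_add, h, h']

lemma rid_lTensor_one_tmul_mul (f : A →ₗ[K] K) (y : A) (W : A ⊗[K] A) :
    TensorProduct.rid K A (f.lTensor A ((1 ⊗ₜ y) * W)) =
      TensorProduct.rid K A ((f ∘ₗ mulLeft K y).lTensor A W) := by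
  induction W using TensorProduct.induction_on with
  | zero => simp
  | tmul u v => simp [Algebra.TensorProduct.tmul_mul_tmul]
  | add W W' h h' => simp [mul_add, h, h']

end TensorProduct

namespace Coalgebra

variable {K A : Type*} [CommSemiring K] [AddCommMonoid A] [Module K A] [Coalgebra K A]

variable (K) in
noncomputable def sliceRight (f : A →ₗ[K] K) : A →ₗ[K] A :=
  (_root_.TensorProduct.rid K A).toLinearMap ∘ₗ f.lTensor A ∘ₗ comul

variable (K) in
noncomputable def sliceLeft (f : A →ₗ[K] K) : A →ₗ[K] A :=
  (_root_.TensorProduct.lid K A).toLinearMap ∘ₗ f.rTensor A ∘ₗ comul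

lemma sliceRight_apply (f : A →ₗ[K] K) (a : A) :
    sliceRight K f a = _root_.TensorProduct.rid K A (f.lTensor A (comul a)) := rfl

lemma apply_sliceLeft (f g : A →ₗ[K] K) (a : A) :
    g (sliceLeft K f a) = f (sliceRight K g a) :=
  apply_lid_rTensor f g (comul a)

lemma sliceRight_counit : sliceRight K (counit : A →ₗ[K] K) = LinearMap.id := by
  ext a; simp [sliceRight]

lemma counit_sliceLeft (f : A →ₗ[K] K) (a : A) : counit (sliceLeft K f a) = f a := by
  rw [apply_sliceLeft, sliceRight_counit, LinearMap.id_apply]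

lemma sliceRight_zero : sliceRight K (0 : A →ₗ[K] K) = 0 := by
  ext a; simp [sliceRight]

end Coalgebra

namespace HopfAlgebra

section Semiring

variable {K A : Type*} [CommSemiring K] [Semiring A]

variable (K) in
def IsLeftIntegral [Bialgebra K A] (φ : A →ₗ[K] K) : Prop :=
  ∀ a, sliceRight K φ a = φ a • 1

variable [HopfAlgebra K A]

lemma mul'_map_includeLeft_antipode_comul (y : A) :
    mul' K (A ⊗[K] A) (map (Algebra.TensorProduct.includeLeft.toLinearMap ∘ₗ antipode K) comul
      (comul y)) = 1 ⊗ₜ y := by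
  set f : A →ₗ[K] A ⊗[K] A := Algebra.TensorProduct.includeLeft.toLinearMap ∘ₗ antipode K
  have hassoc :
      mul' K (A ⊗[K] A) ∘ₗ map f LinearMap.id ∘ₗ (TensorProduct.assoc K A A A).toLinearMap =
        (mul' K A ∘ₗ (antipode K).rTensor A).rTensor A := by
    ext u v w
    simp [f, Algebra.TensorProduct.tmul_mul_tmul]
  calc mul' K (A ⊗[K] A) (map f comul (comul y))
      = (mul' K (A ⊗[K] A) ∘ₗ map f LinearMap.id ∘ₗ (TensorProduct.assoc K A A A).toLinearMap)
          (comul.rTensor A (comul y)) := by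
        simp only [comp_apply, LinearEquiv.coe_coe, coassoc_apply]
        rw [← comp_apply (map f _) (lTensor A comul), map_comp_lTensor, id_comp]
    _ = 1 ⊗ₜ y := by
        rw [hassoc, ← rTensor_comp_apply, comp_assoc, mul_antipode_rTensor_comul,
          rTensor_comp_apply, rTensor_counit_comul]
        simp

lemma sum_smul_antipode_mul_eq {g g' : A →ₗ[K] K} {e : A} (hg : ∀ v, sliceLeft K g v = g' v • e)
    {a : A} {n : ℕ} {x y z : Fin n → A}
    (hrep : (comul (R := K)).lTensor A (comul a) = ∑ i, x i ⊗ₜ[K] (y i ⊗ₜ[K] z i)) :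
    ∑ i, g (y i) • (antipode K (x i) * z i) = antipode K (sliceRight K g' a) * e := by
  have hL : mul' K A ∘ₗ (antipode K).rTensor A ∘ₗ (sliceLeft K g).lTensor A =
      mulRight K e ∘ₗ antipode K ∘ₗ (TensorProduct.rid K A).toLinearMap ∘ₗ g'.lTensor A := by
    ext u v
    simp [hg]
  calc ∑ i, g (y i) • (antipode K (x i) * z i)
      = (mul' K A ∘ₗ (antipode K).rTensor A ∘ₗ
          ((TensorProduct.lid K A).toLinearMap ∘ₗ g.rTensor A).lTensor A)
          (∑ i, x i ⊗ₜ[K] (y i ⊗ₜ[K] z i)) := by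
        simp
    _ = (mul' K A ∘ₗ (antipode K).rTensor A ∘ₗ (sliceLeft K g).lTensor A) (comul a) := by
        rw [← hrep, comp_apply, comp_apply, ← lTensor_comp_apply]
        rfl
    _ = antipode K (sliceRight K g' a) * e := by
        rw [hL]
        rfl

namespace IsLeftIntegral

variable {φ : A →ₗ[K] K} (hφ : IsLeftIntegral K φ)
include hφ

lemma antipode_sliceRight_comp_mulRight (y c : A) :
    antipode K (sliceRight K (φ ∘ₗ mulRight K c) y) = sliceRight K (φ ∘ₗ mulLeft K y) c := by
  have key : ∀ T : A ⊗[K] A,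
      TensorProduct.rid K A (φ.lTensor A (mul' K (A ⊗[K] A)
        (map (Algebra.TensorProduct.includeLeft.toLinearMap ∘ₗ antipode K) comul T) * comul c)) =
      antipode K (TensorProduct.rid K A ((φ ∘ₗ mulRight K c).lTensor A T)) := by
    intro T
    induction T using TensorProduct.induction_on with
    | zero => simp
    | tmul u v =>
      have hvc := hφ (v * c)
      rw [sliceRight_apply, Bialgebra.comul_mul] at hvc
      simp [mul_assoc, rid_lTensor_tmul_one_mul, hvc]
    | add T T' h h' => simp only [map_add, add_mul, h, h']
  rw [sliceRight_apply, sliceRight_apply, ← rid_lTensor_one_tmul_mul,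
    ← mul'_map_includeLeft_antipode_comul, key]

lemma mul_sliceLeft_eq_zero {c : A} (hc : ∀ y, φ (y * c) = 0) (f : A →ₗ[K] K) (y : A) :
    φ (y * sliceLeft K f c) = 0 := by
  have hφc : φ ∘ₗ mulRight K c = 0 := LinearMap.ext hc
  calc φ (y * sliceLeft K f c) = f (sliceRight K (φ ∘ₗ mulLeft K y) c) :=
        apply_sliceLeft f (φ ∘ₗ mulLeft K y) c
    _ = 0 := by rw [← hφ.antipode_sliceRight_comp_mulRight, hφc, sliceRight_zero]; simp

lemma apply_sliceLeft_comp_antipode_mul {δ : A} (hmod : ∀ a, sliceLeft K φ a = φ a • δ) (a c : A) :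
    φ (sliceLeft K (φ ∘ₗ antipode K) a * c) = φ (a * δ) * φ c :=
  calc φ (sliceLeft K (φ ∘ₗ antipode K) a * c)
      = φ (antipode K (sliceRight K (φ ∘ₗ mulRight K c) a)) :=
        apply_sliceLeft (φ ∘ₗ antipode K) (φ ∘ₗ mulRight K c) a
    _ = φ (a * sliceLeft K φ c) := by
        rw [hφ.antipode_sliceRight_comp_mulRight]
        exact (apply_sliceLeft φ (φ ∘ₗ mulLeft K a) c).symm
    _ = φ (a * δ) * φ c := by rw [hmod, mul_smul_comm, map_smul, smul_eq_mul, mul_comm]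

end IsLeftIntegral

end Semiring

namespace IsLeftIntegral

variable {K A : Type*} [Field K] [Ring A] [HopfAlgebra K A] [FiniteDimensional K A]
  {φ : A →ₗ[K] K} (hφ : IsLeftIntegral K φ) (hφ₀ : φ ≠ 0)
include hφ hφ₀

lemma counit_eq_zero_of_forall_mul_eq_zero {c : A} (hc : ∀ y, φ (y * c) = 0) :
    counit (R := K) c = 0 := by
  obtain ⟨t, ht⟩ := LinearMap.surjective hφ₀ 1
  have h := mul_antipode_rTensor_comul_apply (R := K) c
  rw [eq_sum_basis_tmul (Module.finBasis K A) (comul c)] at h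
  simp only [map_sum, rTensor_tmul, mul'_apply] at h
  calc counit c = φ (t * algebraMap K A (counit c)) := by
        simp [Algebra.algebraMap_eq_smul_one, ht]
    _ = 0 := by
        rw [← h, Finset.mul_sum, map_sum]
        exact Finset.sum_eq_zero fun i _ => by
          rw [← mul_assoc]
          exact hφ.mul_sliceLeft_eq_zero hc _ _

lemma separatingRight : ((LinearMap.mul K A).compr₂ φ).SeparatingRight := by
  intro c hc
  refine (Module.forall_dual_apply_eq_zero_iff K c).mp fun f => ?_
  rw [← counit_sliceLeft f c]
  exact hφ.counit_eq_zero_of_forall_mul_eq_zero hφ₀ (hφ.mul_sliceLeft_eq_zero (by simpa using hc) f)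

lemma separatingLeft : ((LinearMap.mul K A).compr₂ φ).SeparatingLeft :=
  (LinearMap.BilinForm.Nondegenerate.ofSeparatingRight (hφ.separatingRight hφ₀)).1

lemma sliceLeft_comp_antipode {δ : A} (hmod : ∀ a, sliceLeft K φ a = φ a • δ) (a : A) :
    sliceLeft K (φ ∘ₗ antipode K) a = φ (a * δ) • 1 := by
  rw [← sub_eq_zero]
  refine hφ.separatingLeft hφ₀ _ fun c => ?_
  simp [hφ.apply_sliceLeft_comp_antipode_mul hmod]

lemma apply_antipode {δ : A} (hmod : ∀ a, sliceLeft K φ a = φ a • δ) (a : A) :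
    φ (antipode K a) = φ (a * δ) := by
  simpa [counit_sliceLeft] using congr(counit (R := K) $(hφ.sliceLeft_comp_antipode hφ₀ hmod a))

end IsLeftIntegral

end HopfAlgebra

theorem stmt_13_general (K A : Type*) [Field K] [Ring A] [HopfAlgebra K A]
    [FiniteDimensional K A]
    (φ : A →ₗ[K] K) (hφ : φ ≠ 0)
    (hleft : ∀ a : A,
      (TensorProduct.rid K A) ((LinearMap.lTensor A φ) (Coalgebra.comul (R := K) a)) = φ a • 1)
    (δ : A)
    (hδ_grouplike : Coalgebra.comul (R := K) δ = δ ⊗ₜ[K] δ)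
    (hmod : ∀ a : A,
      (TensorProduct.lid K A) ((LinearMap.rTensor A φ) (Coalgebra.comul (R := K) a)) = φ a • δ) :
    ∀ (a : A) (n : ℕ) (x y z : Fin n → A),
      (LinearMap.lTensor A (Coalgebra.comul (R := K))) (Coalgebra.comul (R := K) a) =
        ∑ i, x i ⊗ₜ[K] (y i ⊗ₜ[K] z i) →
      (∑ i, φ (y i) • (HopfAlgebra.antipode (R := K) (x i) * z i) = φ a • δ) ∧
      (∑ i, φ (HopfAlgebra.antipode (R := K) (y i)) •
          (HopfAlgebra.antipode (R := K) (x i) * z i) =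
        φ (HopfAlgebra.antipode (R := K) a) • δ) := by
  intro a n x y z hrep
  have hint : IsLeftIntegral K φ := hleft
  constructor
  · rw [sum_smul_antipode_mul_eq hmod hrep, hint a, map_smul, antipode_one, smul_mul_assoc,
      one_mul]
  · have hψ : ∀ v, sliceLeft K (φ ∘ₗ antipode K) v = (φ ∘ₗ mulRight K δ) v • 1 :=
      hint.sliceLeft_comp_antipode hφ hmod
    refine (sum_smul_antipode_mul_eq hψ hrep).trans ?_
    rw [mul_one, hint.antipode_sliceRight_comp_mulRight, hint.apply_antipode hφ hmod]
    simp [sliceRight_apply, hδ_grouplike]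

/-- Let `A` be a finite-dimensional Hopf algebra over a field `K`,
`φ_A` a nonzero left integral, `ψ_A = φ_A ∘ S` the corresponding right integral, and
`δ` the modular (distinguished group-like) element, characterized by
`(φ_A ⊗ ι)Δ(a) = φ_A(a) δ`.  For the adjoint coaction `Γ(a) = Σ S(a₁) a₃ ⊗ a₂`
(of `A^cop` on `A`) one has `(ι ⊗ φ_A)Γ(a) = φ_A(a) δ` and
`(ι ⊗ ψ_A)Γ(a) = ψ_A(a) δ`, i.e. `Σ φ_A(a₂) S(a₁) a₃ = φ_A(a) δ` and
`Σ ψ_A(a₂) S(a₁) a₃ = ψ_A(a) δ`. -/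
theorem stmt_13 (K A : Type*) [Field K] [Ring A] [HopfAlgebra K A]
    [FiniteDimensional K A]
    (φ : A →ₗ[K] K) (hφ : φ ≠ 0)
    (hleft : ∀ a : A,
      (TensorProduct.rid K A) ((LinearMap.lTensor A φ) (Coalgebra.comul (R := K) a)) = φ a • 1)
    (δ : A)
    (hδ_grouplike : Coalgebra.comul (R := K) δ = δ ⊗ₜ[K] δ)
    (hδ_counit : Coalgebra.counit (R := K) δ = 1)
    (hmod : ∀ a : A,
      (TensorProduct.lid K A) ((LinearMap.rTensor A φ) (Coalgebra.comul (R := K) a)) = φ a • δ) :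
    ∀ (a : A) (n : ℕ) (x y z : Fin n → A),
      (LinearMap.lTensor A (Coalgebra.comul (R := K))) (Coalgebra.comul (R := K) a) =
        ∑ i, x i ⊗ₜ[K] (y i ⊗ₜ[K] z i) →
      (∑ i, φ (y i) • (HopfAlgebra.antipode (R := K) (x i) * z i) = φ a • δ) ∧
      (∑ i, φ (HopfAlgebra.antipode (R := K) (y i)) •
          (HopfAlgebra.antipode (R := K) (x i) * z i) =
        φ (HopfAlgebra.antipode (R := K) a) • δ) :=
  stmt_13_general K A φ hφ hleft δ hδ_grouplike hmod
end
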